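/- Let x, x̂ ∈ R^n with ‖x̂‖₁ - α‖x̂‖₂ ≤ ‖x‖₁ - α‖x‖₂ for some 0 < α ≤ 1, and set h = x̂ - x. Then ‖h_{-max(s)}‖₁ - α‖h_{-max(s)}‖₂ ≤ ‖h_{max(s)}‖₁ + 2‖x_{-max(s)}‖₁ + α‖h_{max(s)}‖₂. -/

import Mathlib

/-!
Write `x̂ = x + h`. The reverse triangle inequality, applied on the set `Tx` of the `s`
largest entries of `x` and on its complement, bounds `‖x̂‖₁` from below, and the triangle
inequality bounds `‖x̂‖₂` from above; with the hypothesis this puts `h` in the cone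
`‖h_{Txᶜ}‖₁ ≤ ‖h_{Tx}‖₁ + 2 ‖x_{Txᶜ}‖₁ + α ‖h‖₂`. Replacing `Tx` by the set `Th` of the `s`
largest entries of `h` only moves `ℓ1`-mass of `h` from the tail to the head, and
`‖h‖₂ ≤ ‖h_{Th}‖₂ + ‖h_{Thᶜ}‖₂`.
-/

open Finset

noncomputable def l1 {n : ℕ} (x : Fin n → ℝ) : ℝ := ∑ i, |x i|
noncomputable def l2 {n : ℕ} (x : Fin n → ℝ) : ℝ := Real.sqrt (∑ i, (x i) ^ 2)
noncomputable def linf {n : ℕ} (x : Fin n → ℝ) : ℝ := ‖x‖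

/-- `restrict T x` is the vector equal to `x` on `T` and `0` elsewhere. -/
def restrict {n : ℕ} (T : Finset (Fin n)) (x : Fin n → ℝ) : Fin n → ℝ :=
  fun i => if i ∈ T then x i else 0

/-- `T` indexes `s` largest-in-absolute-value entries of `h`. -/
def IsMaxS {n : ℕ} (s : ℕ) (h : Fin n → ℝ) (T : Finset (Fin n)) : Prop :=
  T.card = s ∧ ∀ i ∈ T, ∀ j ∉ T, |h j| ≤ |h i|

/-- number of nonzero entries. -/
noncomputable def l0 {n : ℕ} (x : Fin n → ℝ) : ℕ := (Finset.univ.filter fun i => x i ≠ 0).card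

/-- The `k` terms of `S \ T` are each at most each of the `k` terms of `T \ S`, so double counting
gives `k • ∑ (S \ T) ≤ k • ∑ (T \ S)`. -/
theorem Finset.sum_le_sum_of_card_eq_of_forall_le {ι M : Type*} [DecidableEq ι] [AddCommMonoid M]
    [LinearOrder M] [IsOrderedCancelAddMonoid M] (f : ι → M) {S T : Finset ι} (hcard : #S = #T)
    (hT : ∀ i ∈ T, ∀ j ∉ T, f j ≤ f i) :
    ∑ i ∈ S, f i ≤ ∑ i ∈ T, f i := by
  have hk : #(S \ T) = #(T \ S) := card_sdiff_comm hcard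
  have hdiff : ∑ j ∈ S \ T, f j ≤ ∑ i ∈ T \ S, f i := by
    rcases Nat.eq_zero_or_pos #(S \ T) with h0 | hpos
    · rw [card_eq_zero.mp h0, card_eq_zero.mp (hk.symm.trans h0)]
    refine le_of_nsmul_le_nsmul_right hpos.ne' ?_
    calc #(S \ T) • ∑ j ∈ S \ T, f j = ∑ _i ∈ T \ S, ∑ j ∈ S \ T, f j := by
          rw [sum_const, hk]
      _ ≤ ∑ i ∈ T \ S, ∑ _j ∈ S \ T, f i := by
          refine sum_le_sum fun i hi => sum_le_sum fun j hj => ?_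
          exact hT i (mem_sdiff.mp hi).1 j (mem_sdiff.mp hj).2
      _ = #(S \ T) • ∑ i ∈ T \ S, f i := by
          simp only [sum_const, smul_sum]
  rw [← sum_inter_add_sum_sdiff S T, ← sum_inter_add_sum_sdiff T S, inter_comm]
  exact add_le_add le_rfl hdiff

section Vectors

variable {n : ℕ}

theorem restrict_add_restrict_compl (T : Finset (Fin n)) (x : Fin n → ℝ) :
    _root_.restrict T x + _root_.restrict Tᶜ x = x := by
  funext i
  by_cases hi : i ∈ T <;> simp [_root_.restrict, hi]

theorem l1_restrict (T : Finset (Fin n)) (x : Fin n → ℝ) :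
    l1 (_root_.restrict T x) = ∑ i ∈ T, |x i| := by
  simp only [l1, _root_.restrict, apply_ite, abs_zero, sum_ite_mem, univ_inter]

theorem l1_restrict_add_l1_restrict_compl (T : Finset (Fin n)) (x : Fin n → ℝ) :
    l1 (_root_.restrict T x) + l1 (_root_.restrict Tᶜ x) = l1 x := by
  rw [l1_restrict, l1_restrict, sum_add_sum_compl, l1]

theorem l2_eq_norm_toLp (x : Fin n → ℝ) : l2 x = ‖WithLp.toLp 2 x‖ := by
  simp [l2, EuclideanSpace.norm_eq, sq_abs]

theorem l2_add_le (x y : Fin n → ℝ) : l2 (x + y) ≤ l2 x + l2 y := by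
  simpa only [l2_eq_norm_toLp, WithLp.toLp_add] using norm_add_le _ _

theorem l2_le_l2_restrict_add_l2_restrict_compl (T : Finset (Fin n)) (x : Fin n → ℝ) :
    l2 x ≤ l2 (_root_.restrict T x) + l2 (_root_.restrict Tᶜ x) := by
  conv_lhs => rw [← restrict_add_restrict_compl T x]
  exact l2_add_le _ _

/-- Reverse triangle inequality coordinatewise: on `T` the entries of `x` dominate, off `T`
those of `h`. -/
theorem l1_sub_l1_restrict_add_l1_restrict_compl_le (T : Finset (Fin n)) (x h : Fin n → ℝ) :
    l1 x - l1 (_root_.restrict T h) + l1 (_root_.restrict Tᶜ h) - 2 * l1 (_root_.restrict Tᶜ x)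
      ≤ l1 (x + h) := by
  have hT : ∑ i ∈ T, (|x i| - |h i|) ≤ ∑ i ∈ T, |x i + h i| :=
    sum_le_sum fun i _ => abs_sub_abs_le_abs_add (x i) (h i)
  have hTc : ∑ i ∈ Tᶜ, (|h i| - |x i|) ≤ ∑ i ∈ Tᶜ, |x i + h i| :=
    sum_le_sum fun i _ => by simpa only [add_comm] using abs_sub_abs_le_abs_add (h i) (x i)
  rw [sum_sub_distrib] at hT hTc
  rw [← l1_restrict_add_l1_restrict_compl T x, ← l1_restrict_add_l1_restrict_compl T (x + h)]
  simp only [l1_restrict, Pi.add_apply] at *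
  linarith

theorem l1_restrict_compl_le_of_l1_sub_l2_le {α : ℝ} (hα : 0 ≤ α) (T : Finset (Fin n))
    {x h : Fin n → ℝ} (hmin : l1 (x + h) - α * l2 (x + h) ≤ l1 x - α * l2 x) :
    l1 (_root_.restrict Tᶜ h) ≤
      l1 (_root_.restrict T h) + 2 * l1 (_root_.restrict Tᶜ x) + α * l2 h := by
  have hl1 := l1_sub_l1_restrict_add_l1_restrict_compl_le T x h
  have hl2 : α * l2 (x + h) ≤ α * l2 x + α * l2 h := by
    rw [← mul_add]; exact mul_le_mul_of_nonneg_left (l2_add_le x h) hα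
  linarith

theorem IsMaxS.l1_restrict_le {s : ℕ} {h : Fin n → ℝ} {T : Finset (Fin n)}
    (hT : IsMaxS s h T) {S : Finset (Fin n)} (hS : #S = s) :
    l1 (_root_.restrict S h) ≤ l1 (_root_.restrict T h) := by
  rw [l1_restrict, l1_restrict]
  exact sum_le_sum_of_card_eq_of_forall_le _ (hS.trans hT.1.symm) hT.2

theorem IsMaxS.l1_restrict_compl_le {s : ℕ} {h : Fin n → ℝ} {T : Finset (Fin n)}
    (hT : IsMaxS s h T) {S : Finset (Fin n)} (hS : #S = s) :
    l1 (_root_.restrict Tᶜ h) ≤ l1 (_root_.restrict Sᶜ h) := by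
  have := hT.l1_restrict_le hS
  have hS' := l1_restrict_add_l1_restrict_compl S h
  have hT' := l1_restrict_add_l1_restrict_compl T h
  linarith

end Vectors

theorem stmt4_general {n s : ℕ} (x xhat : Fin n → ℝ) (α : ℝ) (hα0 : 0 < α)
    (hmin : l1 xhat - α * l2 xhat ≤ l1 x - α * l2 x)
    (Th : Finset (Fin n)) (hTh : IsMaxS s (xhat - x) Th)
    (Tx : Finset (Fin n)) (hTx : IsMaxS s x Tx) :
    l1 (restrict Thᶜ (xhat - x)) - α * l2 (restrict Thᶜ (xhat - x)) ≤
      l1 (restrict Th (xhat - x)) + 2 * l1 (restrict Txᶜ x) +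
        α * l2 (restrict Th (xhat - x)) := by
  set h := xhat - x
  have hcone : l1 (restrict Txᶜ h) ≤ l1 (restrict Tx h) + 2 * l1 (restrict Txᶜ x) + α * l2 h :=
    l1_restrict_compl_le_of_l1_sub_l2_le hα0.le Tx (by rwa [add_sub_cancel])
  have hhead := hTh.l1_restrict_le hTx.1
  have htail := hTh.l1_restrict_compl_le hTx.1
  have hl2 : α * l2 h ≤ α * (l2 (restrict Th h) + l2 (restrict Thᶜ h)) :=
    mul_le_mul_of_nonneg_left (l2_le_l2_restrict_add_l2_restrict_compl Th h) hα0.le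
  linarith

theorem stmt4 {n s : ℕ} (x xhat : Fin n → ℝ) (α : ℝ) (hα0 : 0 < α) (hα1 : α ≤ 1)
    (hmin : l1 xhat - α * l2 xhat ≤ l1 x - α * l2 x)
    (Th : Finset (Fin n)) (hTh : IsMaxS s (xhat - x) Th)
    (Tx : Finset (Fin n)) (hTx : IsMaxS s x Tx) :
    l1 (restrict Thᶜ (xhat - x)) - α * l2 (restrict Thᶜ (xhat - x)) ≤
      l1 (restrict Th (xhat - x)) + 2 * l1 (restrict Txᶜ x) +
        α * l2 (restrict Th (xhat - x)) :=
  stmt4_general x xhat α hα0 hmin Th hTh Tx hTx
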